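/- Let k be a positive integer and p, p' ∈ P_k. Then d(id_k, p∘p') ≤ d(id_k, p) + d(id_k, p') − (k + nc(p∘p') − nc(p) − nc(p'))/2 − κ(p,p'); equivalently, the ≺-defect η(p,p') is nonnegative. -/

import Mathlib

open Sum
open scoped Classical

noncomputable section

namespace PartitionPaper

variable {X : Type*}

/-- The number of blocks of a partition of `X`, encoded as a setoid on `X`. -/
def nc (p : Setoid X) : ℕ := Nat.card (Quotient p)

/-- The geodesic distance `d(p,p') = (nc p + nc p')/2 - nc (p ⊔ p')`. -/
def pdist (p q : Setoid X) : ℚ :=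
  ((nc p : ℚ) + (nc q : ℚ)) / 2 - (nc (p ⊔ q) : ℚ)

/-- Geodesic order with base partition `b` : `p' ≤_b p`. -/
def geoLE (b p' p : Setoid X) : Prop := pdist b p' + pdist p' p = pdist b p

/-- Coarser-compatible order `p' ⊣_b p` : `p'` coarser than `p` and
`nc (p' ⊔ b) = nc (p ⊔ b)`.  (In the setoid lattice, `p ≤ p'` means `p` is finer.) -/
def coarserComp (b p' p : Setoid X) : Prop :=
  p ≤ p' ∧ nc (p' ⊔ b) = nc (p ⊔ b)

/-- Finer-compatible order `p' ⊐_b p` : `p'` finer than `p` and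
`nc p' - nc (p' ⊔ b) = nc p - nc (p ⊔ b)`. -/
def finerComp (b p' p : Setoid X) : Prop :=
  p' ≤ p ∧ (nc p' : ℤ) - (nc (p' ⊔ b) : ℤ) = (nc p : ℤ) - (nc (p ⊔ b) : ℤ)

/-- `p'` is obtained from `p` by gluing two blocks of `p` into one. -/
def IsGluing (p p' : Setoid X) : Prop := p ≤ p' ∧ nc p' + 1 = nc p

/-- The Cayley graph on partitions of `X`: an edge iff one partition is obtained
from the other by gluing two of its blocks into one. -/
def glueGraph (X : Type*) : SimpleGraph (Setoid X) where
  Adj p q := IsGluing p q ∨ IsGluing q p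
  symm := ⟨fun _ _ h => Or.elim h Or.inr Or.inl⟩
  loopless := by
    constructor
    intro p h
    rcases h with ⟨-, h⟩ | ⟨-, h⟩ <;> omega

/-- The segment `[p₁, p₂]` for the geodesic distance. -/
def seg (p₁ p₂ : Setoid X) : Set (Setoid X) :=
  {p | pdist p₁ p + pdist p p₂ = pdist p₁ p₂}

/-- The defect of `p'` from being on `[b, p]`. -/
def df (b p' p : Setoid X) : ℚ := pdist b p' + pdist p' p - pdist b p

/-- Admissible one-step splits: `p'` is obtained by cutting a (pivotal) block of `p`
into two blocks in such a way that the join with `b` gains one block. -/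
def Delta (b p : Setoid X) : Set (Setoid X) :=
  {p' | p' ≤ p ∧ nc p' = nc p + 1 ∧ nc (p' ⊔ b) = nc (p ⊔ b) + 1}

/-- The admissible splits `Sp_b(p) = ⋃ₘ Δ_b^m(p)`. -/
def Sp (b p : Setoid X) : Set (Setoid X) :=
  {p' | Relation.ReflTransGen (fun u v => v ∈ Delta b u) p p'}

/-- The admissible gluings `Gl_b(p)`: partitions obtained by gluing blocks of `p`
without altering the number of blocks of the join with `b`. -/
def Gl (b p : Setoid X) : Set (Setoid X) :=
  {p' | p ≤ p' ∧ nc (p' ⊔ b) = nc (p ⊔ b)}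

/-- `p'` is directly smaller than `p` for the relation `r`. -/
def DirectlySmaller (r : Setoid X → Setoid X → Prop) (p' p : Setoid X) : Prop :=
  r p' p ∧ p' ≠ p ∧ ¬ ∃ p'', p'' ≠ p ∧ p'' ≠ p' ∧ r p' p'' ∧ r p'' p

/-- The block of the partition `p` corresponding to a class `c`. -/
def blockSet (p : Setoid X) (c : Quotient p) : Set X := {x | Quotient.mk p x = c}

/-- The number of blocks of `q` contained in the block `c` of `p`. -/
def numSubBlocks (q p : Setoid X) (c : Quotient p) : ℕ :=
  Nat.card {d : Quotient q // blockSet q d ⊆ blockSet p c}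

/-- The number of blocks of `p` containing exactly `i` blocks of `q`. -/
def rcount (q p : Setoid X) (i : ℕ) : ℕ :=
  Nat.card {c : Quotient p // numSubBlocks q p c = i}

/-- The Möbius function of the refinement order:
`μ_f(q,p) = (-1)^(nc q - nc p) ∏_i ((i-1)!)^(r_i)` for `q` finer than `p`. -/
def muf (q p : Setoid X) : ℤ :=
  (-1) ^ (nc q - nc p) *
    ∏ i ∈ Finset.range (nc q + 1), ((Nat.factorial (i - 1) : ℤ)) ^ (rcount q p i)

/-- `P_k`: partitions of `{1,…,k} ∪ {1',…,k'}`, the left summand being the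
unprimed (top) row and the right summand the primed (bottom) row. -/
abbrev Pk (k : ℕ) := Setoid (Fin k ⊕ Fin k)

/-- The identity partition `id_k = {{i, i'} : 1 ≤ i ≤ k}`. -/
def idk (k : ℕ) : Pk k := Setoid.ker (Sum.elim id id)

/-- The permutation partition associated with `σ`, with blocks `{i, σ(i)'}`. -/
def permPartition {k : ℕ} (σ : Equiv.Perm (Fin k)) : Pk k :=
  Setoid.ker (Sum.elim id σ.symm)

/-- `S_k`, the set of permutation partitions. -/
def Sk (k : ℕ) : Set (Pk k) := Set.range (permPartition (k := k))

/-- `B_k`, the set of Brauer partitions: all blocks have exactly two elements. -/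
def Bk (k : ℕ) : Set (Pk k) := {p | ∀ x, Nat.card {y | p.r x y} = 2}

/-- Embedding of the top/bottom rows of the upper diagram `q` into the
three-row diagram (top ⊕ (middle ⊕ bottom)). -/
def upMap (k : ℕ) : Fin k ⊕ Fin k → Fin k ⊕ (Fin k ⊕ Fin k) :=
  Sum.elim Sum.inl (fun i => Sum.inr (Sum.inl i))

/-- Embedding of the top/bottom rows of the lower diagram `p` into the
three-row diagram. -/
def downMap (k : ℕ) : Fin k ⊕ Fin k → Fin k ⊕ (Fin k ⊕ Fin k) :=
  Sum.elim (fun i => Sum.inr (Sum.inl i)) (fun i => Sum.inr (Sum.inr i))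

/-- The partition of the three-row diagram obtained by stacking a diagram of `q`
on top of a diagram of `p` (identifying the bottom row of `q` with the top row
of `p`): the equivalence relation generated by the copies of `q` and `p`. -/
def stackSetoid {k : ℕ} (p q : Pk k) : Setoid (Fin k ⊕ (Fin k ⊕ Fin k)) :=
  sInf {s | ∀ x y,
    ((∃ a b, upMap k a = x ∧ upMap k b = y ∧ q.r a b) ∨
     (∃ a b, downMap k a = x ∧ downMap k b = y ∧ p.r a b)) → s.r x y}

/-- The composition `p ∘ q` (a diagram of `q` stacked above a diagram of `p`),
obtained by restricting the stacked partition to the outer rows. -/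
def comp {k : ℕ} (p q : Pk k) : Pk k :=
  Setoid.comap (Sum.elim Sum.inl (fun i => Sum.inr (Sum.inr i))) (stackSetoid p q)

/-- `κ(p,q)`: the number of connected components of the stacked diagram entirely
contained in the middle row. -/
def kappaP {k : ℕ} (p q : Pk k) : ℕ :=
  Nat.card {c : Quotient (stackSetoid p q) //
    ∀ x, Quotient.mk (stackSetoid p q) x = c → ∃ i : Fin k, x = Sum.inr (Sum.inl i)}

/-- The transpose `ᵗp`, exchanging the two rows. -/
def transpose {k : ℕ} (p : Pk k) : Pk k := Setoid.comap Sum.swap p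

/-- The disjoint-union partition on a sum type. -/
def sumSetoid {α β : Type*} (p : Setoid α) (q : Setoid β) : Setoid (α ⊕ β) :=
  Setoid.ker (Sum.map (Quotient.mk p) (Quotient.mk q))

/-- Reindexing of the rows for the tensor product. -/
def reindex (k l : ℕ) :
    Fin (k + l) ⊕ Fin (k + l) → (Fin k ⊕ Fin k) ⊕ (Fin l ⊕ Fin l) :=
  Sum.elim
    (fun j => Sum.elim (fun a => Sum.inl (Sum.inl a)) (fun b => Sum.inr (Sum.inl b))
      (finSumFinEquiv.symm j))
    (fun j => Sum.elim (fun a => Sum.inl (Sum.inr a)) (fun b => Sum.inr (Sum.inr b))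
      (finSumFinEquiv.symm j))

/-- The tensor product `p ⊗ q ∈ P_{k+l}`: a diagram of `p` placed to the left of
a diagram of `q`. -/
def tensor {k l : ℕ} (p : Pk k) (q : Pk l) : Pk (k + l) :=
  Setoid.comap (reindex k l) (sumSetoid p q)

/-- The `≺`-defect `η(p,q)`. -/
def eta {k : ℕ} (p q : Pk k) : ℚ :=
  pdist (idk k) p + pdist (idk k) q - pdist (idk k) (comp p q)
    - ((k : ℚ) + (nc (comp p q) : ℚ) - (nc p : ℚ) - (nc q : ℚ)) / 2 - (kappaP p q : ℚ)

/-- The Kreweras complement of `p'` in `p`: the set of `p''` with `p = p' ∘ p''`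
realizing equality in the `≺`-defect inequality. -/
def Krew {k : ℕ} (p p' : Pk k) : Set (Pk k) :=
  {p'' | comp p' p'' = p ∧ eta p' p'' = 0}

/-- `p' ≺ p` : `p'` is an admissible prefix of `p`. -/
def prec {k : ℕ} (p' p : Pk k) : Prop :=
  ∃ p'', comp p' p'' = p ∧ eta p' p'' = 0

/-- The partition of `{1,…,k}` into the orbits (cycles) of the permutation `σ`. -/
def cycleSetoid {k : ℕ} (σ : Equiv.Perm (Fin k)) : Setoid (Fin k) :=
  ⟨σ.SameCycle,
    ⟨fun x => Equiv.Perm.SameCycle.refl σ x, fun h => h.symm, fun h₁ h₂ => h₁.trans h₂⟩⟩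

/-- A partition of `{1,…,k}` is non-crossing if there are no `a < b < c < d` with
`a, c` in one block and `b, d` in a different block. -/
def NonCrossing {k : ℕ} (π : Setoid (Fin k)) : Prop :=
  ¬ ∃ a b c d : Fin k, a < b ∧ b < c ∧ c < d ∧ π.r a c ∧ π.r b d ∧ ¬ π.r a b

/-- The map sending a permutation partition to the partition of `{1,…,k}` into
the orbits of the corresponding bijection (the blocks of `p ⊔ id_k` restricted
to the top row). -/
def orbitMap {k : ℕ} (p : Pk k) : Setoid (Fin k) :=
  Setoid.comap (Sum.inl : Fin k → Fin k ⊕ Fin k) (p ⊔ idk k)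

/-- The permutation `(1,k+1)(2,k+2)⋯(k,2k)` of `{1,…,2k}`. -/
def tauPerm (k : ℕ) : Equiv.Perm (Fin (k + k)) :=
  (finSumFinEquiv.symm.trans (Equiv.sumComm (Fin k) (Fin k))).trans finSumFinEquiv

/-- The left part of a partition in `P_{k₁+k₂}`. -/
def leftPart {k₁ k₂ : ℕ} (p : Pk (k₁ + k₂)) : Pk k₁ :=
  Setoid.comap (Sum.map (Fin.castAdd k₂) (Fin.castAdd k₂)) p

/-- The right part of a partition in `P_{k₁+k₂}`. -/
def rightPart {k₁ k₂ : ℕ} (p : Pk (k₁ + k₂)) : Pk k₂ :=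
  Setoid.comap (Sum.map (Fin.natAdd k₁) (Fin.natAdd k₁)) p

/-- The `p`-moment `m_p(E_N) = Tr_N(E_N ᵗp)/N^{nc(p ⊔ id_k)}
`= ∑_{p'} (E_N)_{p'} N^{nc(p ⊔ p') - nc(p ⊔ id_k)}`. -/
def momentF {k : ℕ} (E : ℕ → Pk k → ℂ) (p : Pk k) (N : ℕ) : ℂ :=
  ∑ᶠ p' : Pk k, E N p' * (N : ℂ) ^ ((nc (p ⊔ p') : ℤ) - (nc (p ⊔ idk k) : ℤ))

/-- The `p`-cumulant `κ_p(E_N) = N^{nc p - nc (p ⊔ id_k)} (E_N)_p`. -/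
def cumulantF {k : ℕ} (E : ℕ → Pk k → ℂ) (p : Pk k) (N : ℕ) : ℂ :=
  (N : ℂ) ^ ((nc p : ℤ) - (nc (p ⊔ idk k) : ℤ)) * E N p

/-!
Stack a diagram of `p'` on a diagram of `p`: the stacked partition `S` is the join of `U p'`
(`p'` on the top and middle rows, the bottom row discrete) and `D p` (`p` on the middle and bottom
rows, the top row discrete), with `nc (U q) = nc q + k = nc (D q)`. The number of blocks is
semimodular on the lattice of partitions: `nc a + nc (b ⊔ e) ≤ nc (a ⊔ e) + nc b` whenever `b` is
finer than `a`. Joining `S` first with `U id` and then with `D id` therefore gives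
`nc S + nc (p' ⊔ id) + nc (p ⊔ id) ≤ nc (S ⊔ U id ⊔ D id) + nc p' + nc p`. Finally the blocks of `S`
are the blocks of `p ∘ p'` together with the `κ(p,p')` blocks inside the middle row, and every block
of `S ⊔ U id ⊔ D id` meets the outer rows, where it contains a block of `id ⊔ p ∘ p'`. Rearranged,
this is `η(p,p') ≥ 0`.
-/

section Counting

variable {α β : Type*}

theorem nc_le_nc_of_le [Finite α] {u v : Setoid α} (h : u ≤ v) : nc v ≤ nc u :=
  Nat.card_le_card_of_surjective (Setoid.map_of_le h) (Quotient.ind fun x => ⟨⟦x⟧, rfl⟩)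

theorem nc_ker_eq_card_range (f : α → β) : nc (Setoid.ker f) = Nat.card (Set.range f) :=
  Nat.card_congr (Setoid.quotientKerEquivRange f)

theorem nc_ker_of_surjective {f : α → β} (hf : Function.Surjective f) :
    nc (Setoid.ker f) = Nat.card β :=
  Nat.card_congr (Setoid.quotientKerEquivOfSurjective f hf)

theorem nc_comap_equiv (e : α ≃ β) (s : Setoid β) : nc (s.comap e) = nc s :=
  Nat.card_congr (Quotient.congr e fun _ _ => Iff.rfl)

theorem nc_bot : nc (⊥ : Setoid α) = Nat.card α :=
  Nat.card_congr (Setoid.quotientBotEquiv)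

theorem nc_le_of_le_comap [Finite α] {f : α → β} {a : Setoid α} {s : Setoid β}
    (h : a ≤ s.comap f) (hf : ∀ y, ∃ x, s (f x) y) : nc s ≤ nc a :=
  Nat.card_le_card_of_surjective
    (Quotient.lift (fun x => ⟦f x⟧) fun _ _ hxy => Quotient.sound (h hxy))
    (Quotient.ind fun y => let ⟨x, hx⟩ := hf y; ⟨⟦x⟧, Quotient.sound hx⟩)

theorem nc_comap_add_card_le [Finite β] (f : α → β) (s : Setoid β) {P : β → Prop}
    (hP : ∀ x, ¬ P (f x)) :
    nc (s.comap f) + Nat.card {c : Quotient s // ∀ y, Quotient.mk s y = c → P y} ≤ nc s := by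
  let Q (c : Quotient s) : Prop := ∀ y, Quotient.mk s y = c → P y
  have hsplit : Nat.card {c // ¬ Q c} + Nat.card {c // Q c} = nc s := by
    rw [← Nat.card_sum]
    exact Nat.card_congr ((Equiv.sumComm _ _).trans (Equiv.sumCompl Q))
  have hle : nc (s.comap f) ≤ Nat.card {c // ¬ Q c} :=
    Nat.card_le_card_of_injective
      (Quotient.lift (fun x => ⟨⟦f x⟧, fun hQ => hP x (hQ _ rfl)⟩) fun _ _ hxy =>
        Subtype.ext (Quotient.sound hxy))
      (Quotient.ind₂ fun x y hxy =>
        Quotient.sound (Quotient.exact (s := s) (congrArg Subtype.val hxy)))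
  change _ + Nat.card {c // Q c} ≤ _
  omega

end Counting

section Semimodularity

variable {α : Type*}

def atom (x y : α) : Setoid α := Relation.EqvGen.setoid fun a b => a = x ∧ b = y

theorem atom_rel (x y : α) : atom x y x y := Relation.EqvGen.rel _ _ ⟨rfl, rfl⟩

theorem atom_le {e : Setoid α} {x y : α} (h : e x y) : atom x y ≤ e :=
  Setoid.eqvGen_le (by rintro _ _ ⟨rfl, rfl⟩; exact h)

theorem sup_atom_eq_ker (u : Setoid α) (x y : α) :
    u ⊔ atom x y = Setoid.ker (Function.update id ⟦y⟧ ⟦x⟧ ∘ Quotient.mk u) := by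
  refine le_antisymm (sup_le (fun a b h => ?_) (atom_le ?_)) fun a b h => ?_
  · simp [Setoid.ker_def, Quotient.sound h]
  · simp only [Setoid.ker_def, Function.comp_apply, Function.update_apply, id]
    split_ifs <;> simp_all
  · set w := u ⊔ atom x y
    have hu : u ≤ w := le_sup_left
    have hxy : w x y := (le_sup_right : atom x y ≤ w) (atom_rel x y)
    simp only [Setoid.ker_def, Function.comp_apply, Function.update_apply, id] at h
    split_ifs at h with ha hb hb
    · exact w.trans (hu (Quotient.exact ha)) (w.symm (hu (Quotient.exact hb)))
    · exact w.trans (hu (Quotient.exact ha)) (w.trans (w.symm hxy) (hu (Quotient.exact h)))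
    · exact w.trans (hu (Quotient.exact h)) (w.trans hxy (w.symm (hu (Quotient.exact hb))))
    · exact hu (Quotient.exact h)

theorem nc_sup_atom_add_one [Finite α] {u : Setoid α} {x y : α} (h : ¬ u x y) :
    nc (u ⊔ atom x y) + 1 = nc u := by
  have hne : (⟦x⟧ : Quotient u) ≠ ⟦y⟧ := fun e => h (Quotient.exact e)
  have hrange : Set.range (Function.update id ⟦y⟧ ⟦x⟧ ∘ Quotient.mk u) = {⟦y⟧}ᶜ := by
    rw [Quotient.mk_surjective.range_comp]
    ext c
    constructor
    · rintro ⟨d, rfl⟩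
      by_cases hd : d = ⟦y⟧ <;> simp [hd, hne]
    · exact fun hc => ⟨c, Function.update_of_ne hc _ _⟩
  rw [sup_atom_eq_ker, nc_ker_eq_card_range, hrange, Nat.card_coe_set_eq,
    ← Set.ncard_singleton (⟦y⟧ : Quotient u), Set.ncard_compl_add_ncard]
  rfl

theorem nc_add_nc_sup_atom_le [Finite α] {a b : Setoid α} (hba : b ≤ a) (x y : α) :
    nc a + nc (b ⊔ atom x y) ≤ nc (a ⊔ atom x y) + nc b := by
  by_cases hb : b x y
  · rw [sup_eq_left.2 (atom_le hb), sup_eq_left.2 (atom_le (hba hb))]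
  have hb' := nc_sup_atom_add_one hb
  by_cases ha : a x y
  · rw [sup_eq_left.2 (atom_le ha)]
    omega
  · have ha' := nc_sup_atom_add_one ha
    omega

theorem nc_add_nc_sup_le [Finite α] {a b : Setoid α} (e : Setoid α) (hba : b ≤ a) :
    nc a + nc (b ⊔ e) ≤ nc (a ⊔ e) + nc b := by
  induction hn : nc b using Nat.strong_induction_on generalizing a b with
  | _ n ih =>
    by_cases heb : e ≤ b
    · rw [sup_eq_left.2 heb, sup_eq_left.2 (heb.trans hba), hn]
    obtain ⟨x, y, hexy, hbxy⟩ : ∃ x y, e x y ∧ ¬ b x y := by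
      simpa [Setoid.le_def] using heb
    have hlt : nc (b ⊔ atom x y) < n := by
      have := nc_sup_atom_add_one hbxy
      omega
    have step := ih _ hlt (sup_le_sup_right hba (atom x y)) rfl
    rw [sup_assoc, sup_assoc, sup_eq_right.2 (atom_le hexy)] at step
    have := nc_add_nc_sup_atom_le hba x y
    omega

end Semimodularity

section SumSetoid

variable {α β : Type*} {p p' : Setoid α} {q q' : Setoid β}

@[simp]
theorem sumSetoid_inl_inl {a b : α} : sumSetoid p q (inl a) (inl b) ↔ p a b := by
  rw [sumSetoid, Setoid.ker_def]
  simp [Quotient.eq]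

@[simp]
theorem sumSetoid_inr_inr {a b : β} : sumSetoid p q (inr a) (inr b) ↔ q a b := by
  rw [sumSetoid, Setoid.ker_def]
  simp [Quotient.eq]

@[simp]
theorem sumSetoid_inl_inr {a : α} {b : β} : ¬ sumSetoid p q (inl a) (inr b) := by
  rw [sumSetoid, Setoid.ker_def]
  simp

@[simp]
theorem sumSetoid_inr_inl {a : β} {b : α} : ¬ sumSetoid p q (inr a) (inl b) := by
  rw [sumSetoid, Setoid.ker_def]
  simp

theorem sumSetoid_mono (hp : p ≤ p') (hq : q ≤ q') : sumSetoid p q ≤ sumSetoid p' q' := by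
  rintro (a | a) (b | b) h <;> simp only [sumSetoid_inl_inl, sumSetoid_inr_inr, sumSetoid_inl_inr,
    sumSetoid_inr_inl] at h ⊢
  exacts [hp h, hq h]

theorem nc_sumSetoid [Finite α] [Finite β] (p : Setoid α) (q : Setoid β) :
    nc (sumSetoid p q) = nc p + nc q := by
  rw [sumSetoid, nc_ker_of_surjective (Quotient.mk_surjective.sumMap Quotient.mk_surjective),
    Nat.card_sum]
  rfl

end SumSetoid

section Stacking

variable {k : ℕ}

/-- The three rows are `Fin k ⊕ (Fin k ⊕ Fin k)` (top, middle, bottom), as in `stackSetoid`;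
`upperDiagram q` is `q` on the top and middle rows with the bottom row discrete. -/
def upperDiagram (q : Pk k) : Setoid (Fin k ⊕ (Fin k ⊕ Fin k)) :=
  (sumSetoid q (⊥ : Setoid (Fin k))).comap (Equiv.sumAssoc (Fin k) (Fin k) (Fin k)).symm

def lowerDiagram (p : Pk k) : Setoid (Fin k ⊕ (Fin k ⊕ Fin k)) := sumSetoid ⊥ p

theorem upperDiagram_apply {q : Pk k} {x y : Fin k ⊕ (Fin k ⊕ Fin k)} :
    upperDiagram q x y ↔ sumSetoid q ⊥ ((Equiv.sumAssoc _ _ _).symm x)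
      ((Equiv.sumAssoc _ _ _).symm y) :=
  Iff.rfl

theorem lowerDiagram_apply {p : Pk k} {x y : Fin k ⊕ (Fin k ⊕ Fin k)} :
    lowerDiagram p x y ↔ sumSetoid ⊥ p x y :=
  Iff.rfl

theorem nc_upperDiagram (q : Pk k) : nc (upperDiagram q) = nc q + k := by
  rw [upperDiagram, nc_comap_equiv, nc_sumSetoid, nc_bot, Nat.card_fin]

theorem nc_lowerDiagram (p : Pk k) : nc (lowerDiagram p) = k + nc p := by
  rw [lowerDiagram, nc_sumSetoid, nc_bot, Nat.card_fin]

theorem upperDiagram_mono {q q' : Pk k} (h : q ≤ q') : upperDiagram q ≤ upperDiagram q' :=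
  fun _ _ hxy => sumSetoid_mono h le_rfl hxy

theorem lowerDiagram_mono {p p' : Pk k} (h : p ≤ p') : lowerDiagram p ≤ lowerDiagram p' :=
  sumSetoid_mono le_rfl h

theorem upperDiagram_upMap {q : Pk k} {a b : Fin k ⊕ Fin k} :
    upperDiagram q (upMap k a) (upMap k b) ↔ q a b := by
  cases a <;> cases b <;> simp [upperDiagram_apply, upMap]

theorem lowerDiagram_downMap {p : Pk k} {a b : Fin k ⊕ Fin k} :
    lowerDiagram p (downMap k a) (downMap k b) ↔ p a b := by
  cases a <;> cases b <;> simp [lowerDiagram_apply, downMap]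

theorem upperDiagram_le {q : Pk k} {s : Setoid (Fin k ⊕ (Fin k ⊕ Fin k))}
    (h : ∀ a b, q a b → s (upMap k a) (upMap k b)) : upperDiagram q ≤ s := by
  rintro (i | i | i) (j | j | j) hij <;> simp [upperDiagram_apply] at hij
  all_goals first
    | exact h _ _ hij
    | exact hij ▸ s.refl _

theorem lowerDiagram_le {p : Pk k} {s : Setoid (Fin k ⊕ (Fin k ⊕ Fin k))}
    (h : ∀ a b, p a b → s (downMap k a) (downMap k b)) : lowerDiagram p ≤ s := by
  rintro (i | i | i) (j | j | j) hij <;> simp [lowerDiagram_apply] at hij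
  all_goals first
    | exact h _ _ hij
    | exact hij ▸ s.refl _

theorem stackSetoid_eq (p q : Pk k) : stackSetoid p q = upperDiagram q ⊔ lowerDiagram p := by
  refine le_antisymm (sInf_le ?_) (le_sInf fun s hs => sup_le ?_ ?_)
  · rintro _ _ (⟨a, b, rfl, rfl, hab⟩ | ⟨a, b, rfl, rfl, hab⟩)
    · exact (le_sup_left : upperDiagram q ≤ _) (upperDiagram_upMap.2 hab)
    · exact (le_sup_right : lowerDiagram p ≤ _) (lowerDiagram_downMap.2 hab)
  · exact upperDiagram_le fun a b hab => hs _ _ (Or.inl ⟨a, b, rfl, rfl, hab⟩)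
  · exact lowerDiagram_le fun a b hab => hs _ _ (Or.inr ⟨a, b, rfl, rfl, hab⟩)

end Stacking

section Defect

variable {k : ℕ}

theorem nc_idk : nc (idk k) = k := by
  rw [idk, nc_ker_of_surjective fun i => ⟨inl i, rfl⟩, Nat.card_fin]

theorem nc_comp_add_kappaP_le (p q : Pk k) : nc (comp p q) + kappaP p q ≤ nc (stackSetoid p q) :=
  nc_comap_add_card_le _ _ (by rintro (i | i) ⟨j, hj⟩ <;> cases hj)

theorem nc_stackSetoid_add_le (p q : Pk k) :
    nc (stackSetoid p q) + nc (q ⊔ idk k) + nc (p ⊔ idk k) ≤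
      nc (stackSetoid p q ⊔ upperDiagram (idk k) ⊔ lowerDiagram (idk k)) + nc q + nc p := by
  rw [stackSetoid_eq]
  have hup := nc_add_nc_sup_le (upperDiagram (idk k))
    (le_sup_left : upperDiagram q ≤ upperDiagram q ⊔ lowerDiagram p)
  have hlow := nc_add_nc_sup_le (lowerDiagram (idk k)) (le_sup_right.trans le_sup_left :
    lowerDiagram p ≤ upperDiagram q ⊔ lowerDiagram p ⊔ upperDiagram (idk k))
  have hup' := nc_le_nc_of_le (sup_le (upperDiagram_mono (le_sup_left : q ≤ q ⊔ idk k))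
    (upperDiagram_mono (le_sup_right : idk k ≤ q ⊔ idk k)))
  have hlow' := nc_le_nc_of_le (sup_le (lowerDiagram_mono (le_sup_left : p ≤ p ⊔ idk k))
    (lowerDiagram_mono (le_sup_right : idk k ≤ p ⊔ idk k)))
  rw [nc_upperDiagram] at hup hup'
  rw [nc_lowerDiagram] at hlow hlow'
  omega

theorem nc_sup_upperDiagram_lowerDiagram_le (p q : Pk k) :
    nc (stackSetoid p q ⊔ upperDiagram (idk k) ⊔ lowerDiagram (idk k)) ≤
      nc (idk k ⊔ comp p q) := by
  set T := stackSetoid p q ⊔ upperDiagram (idk k) ⊔ lowerDiagram (idk k)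
  have hup (i : Fin k) : T (inl i) (inr (inl i)) :=
    (le_sup_right.trans le_sup_left : upperDiagram (idk k) ≤ T)
      (upperDiagram_upMap (a := inl i) (b := inr i) |>.2 rfl)
  have hlow (i : Fin k) : T (inr (inl i)) (inr (inr i)) :=
    (le_sup_right : lowerDiagram (idk k) ≤ T)
      (lowerDiagram_downMap (a := inl i) (b := inr i) |>.2 rfl)
  refine nc_le_of_le_comap (sup_le ?_ fun x y h => (le_sup_left.trans le_sup_left : _ ≤ T) h) ?_
  · rintro (i | i) (j | j) (hij : i = j) <;> subst hij
    exacts [T.refl _, T.trans (hup i) (hlow i), T.symm (T.trans (hup i) (hlow i)), T.refl _]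
  · rintro (i | i | i)
    exacts [⟨inl i, T.refl _⟩, ⟨inl i, hup i⟩, ⟨inr i, T.refl _⟩]

theorem nc_comp_add_kappaP_add_le (p q : Pk k) :
    nc (comp p q) + kappaP p q + nc (idk k ⊔ p) + nc (idk k ⊔ q) ≤
      nc (idk k ⊔ comp p q) + nc p + nc q := by
  have h₁ := nc_comp_add_kappaP_le p q
  have h₂ := nc_stackSetoid_add_le p q
  have h₃ := nc_sup_upperDiagram_lowerDiagram_le p q
  rw [sup_comm (idk k) p, sup_comm (idk k) q]
  omega

end Defect

theorem statement15_general (k : ℕ) (p p' : Pk k) :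
    pdist (idk k) (comp p p') ≤
      pdist (idk k) p + pdist (idk k) p' -
        ((k : ℚ) + (nc (comp p p') : ℚ) - (nc p : ℚ) - (nc p' : ℚ)) / 2 -
          (kappaP p p' : ℚ) ∧
    0 ≤ eta p p' := by
  have h : (nc (comp p p') + kappaP p p' + nc (idk k ⊔ p) + nc (idk k ⊔ p') : ℚ) ≤
      nc (idk k ⊔ comp p p') + nc p + nc p' := mod_cast nc_comp_add_kappaP_add_le p p'
  simp only [eta, pdist, nc_idk]
  constructor <;> linarith

/-- For all `p, p' ∈ P_k`,
`d(id_k, p∘p') ≤ d(id_k,p) + d(id_k,p') - (k + nc(p∘p') - nc p - nc p')/2 - κ(p,p')`;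
equivalently, the `≺`-defect `η(p,p')` is nonnegative. -/
theorem statement15 (k : ℕ) (hk : 0 < k) (p p' : Pk k) :
    pdist (idk k) (comp p p') ≤
      pdist (idk k) p + pdist (idk k) p' -
        ((k : ℚ) + (nc (comp p p') : ℚ) - (nc p : ℚ) - (nc p' : ℚ)) / 2 -
          (kappaP p p' : ℚ) ∧
    0 ≤ eta p p' :=
  statement15_general k p p'

end PartitionPaper
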